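/- arXiv:1510.08962 — 4 statements merged into one kernel-verified Lean document; each statement's English description precedes it below -/
import Mathlib

section
/- Let ℓ be a prime. For every partition λ (a weakly decreasing sequence of positive integers, extended by zeros), there exists a unique sequence (μ⁽⁰⁾, μ⁽¹⁾, μ⁽²⁾, …) of ℓ-restricted partitions, all but finitely many of which are the empty partition, such that for every index j ≥ 1 one has λ_j = Σ_{i≥0} ℓ^i · μ⁽ⁱ⁾_j (componentwise sum of parts). (This ℓ-adic expansion of partitions is the combinatorial content of the modular generalized Springer correspondence for GL(n): it realizes the bijection sending a collection of ℓ-regular partitions λ⁽ⁱ⁾ to the partition λ = Σ_i ℓ^i (λ⁽ⁱ⁾)^t.) -/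
/-!
Record a partition by its successive differences `λ_j - λ_{j+1}`, a finitely supported
sequence from which the partition is recovered by summing tails. The expansion
`λ = ∑ ℓ^i μ⁽ⁱ⁾` is additive, so on differences it reads
`λ_j - λ_{j+1} = ∑ ℓ^i (μ⁽ⁱ⁾_j - μ⁽ⁱ⁾_{j+1})`, and `μ⁽ⁱ⁾` is `ℓ`-restricted exactly when its
differences are `< ℓ`. Hence the differences of `μ⁽ⁱ⁾` must be the `i`-th base-`ℓ` digits of
the differences of `λ`, which proves uniqueness, and summing the tails of these digits proves
existence.
-/

open Finset Function

namespace Nat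

variable {b : ℕ}

lemma sum_range_pow_mul_div_pow_mod_eq_mod (n M : ℕ) :
    ∑ i ∈ range M, b ^ i * (n / b ^ i % b) = n % b ^ M := by
  induction M with
  | zero => simp [Nat.mod_one]
  | succ M ih => rw [sum_range_succ, ih, pow_succ, Nat.mod_mul]

lemma div_pow_mod_eq_zero_of_lt {n i : ℕ} (h : n < b ^ i) : n / b ^ i % b = 0 := by
  simp [Nat.div_eq_of_lt h]

lemma support_div_pow_mod_subset (hb : 1 < b) (n : ℕ) :
    support (fun i => n / b ^ i % b) ⊆ range n := fun i hi => by
  by_contra h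
  exact hi <| div_pow_mod_eq_zero_of_lt <|
    (Nat.lt_pow_self hb).trans_le (Nat.pow_le_pow_right (by omega) (by simpa using h))

lemma finsum_pow_mul_div_pow_mod (hb : 1 < b) (n : ℕ) :
    ∑ᶠ i, b ^ i * (n / b ^ i % b) = n := by
  rw [finsum_eq_sum_of_support_subset _
      ((support_mul_subset_right _ _).trans (support_div_pow_mod_subset hb n)),
    sum_range_pow_mul_div_pow_mod_eq_mod, Nat.mod_eq_of_lt (Nat.lt_pow_self hb)]

lemma finsum_pow_mul_sum_div_pow_mod {ι : Type*} (hb : 1 < b) (s : Finset ι) (d : ι → ℕ) :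
    ∑ᶠ i, b ^ i * ∑ k ∈ s, d k / b ^ i % b = ∑ k ∈ s, d k := by
  simp_rw [mul_sum]
  rw [finsum_sum_comm]
  · exact sum_congr rfl fun k _ => finsum_pow_mul_div_pow_mod hb (d k)
  · exact fun k _ => ((range (d k)).finite_toSet.subset
      ((support_mul_subset_right _ _).trans (support_div_pow_mod_subset hb (d k))))

lemma sum_range_pow_mul_lt {a : ℕ → ℕ} (ha : ∀ i, a i < b) (M : ℕ) :
    ∑ i ∈ range M, b ^ i * a i < b ^ M := by
  induction M with
  | zero => simp
  | succ M ih =>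
    calc ∑ i ∈ range (M + 1), b ^ i * a i < b ^ M + b ^ M * a M := by
          rw [sum_range_succ]; omega
      _ = b ^ M * (a M + 1) := by ring
      _ ≤ b ^ (M + 1) := by rw [pow_succ]; exact Nat.mul_le_mul_left _ (ha M)

lemma div_pow_mod_sum_range_pow_mul {a : ℕ → ℕ} (ha : ∀ i, a i < b) {k M : ℕ}
    (hk : k < M) : (∑ i ∈ range M, b ^ i * a i) / b ^ k % b = a k := by
  obtain ⟨m, rfl⟩ := Nat.exists_eq_add_of_lt hk
  have hb : 0 < b := (ha k).trans_le' (Nat.zero_le _)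
  have htail : ∑ x ∈ range m, b ^ (k + 1 + x) * a (k + 1 + x)
      = b ^ k * (b * ∑ x ∈ range m, b ^ x * a (k + 1 + x)) := by
    rw [mul_sum, mul_sum]
    exact sum_congr rfl fun x _ => by ring
  rw [show k + m + 1 = k + 1 + m by omega, sum_range_add, sum_range_succ, htail, add_assoc,
    ← mul_add, Nat.add_mul_div_left _ _ (pow_pos hb k),
    Nat.div_eq_of_lt (sum_range_pow_mul_lt ha k), zero_add, Nat.add_mul_mod_self_left,
    Nat.mod_eq_of_lt (ha k)]

lemma eq_div_pow_mod_of_eq_finsum {a : ℕ → ℕ} (ha : ∀ i, a i < b) (hfin : HasFiniteSupport a)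
    {n : ℕ} (hn : n = ∑ᶠ i, b ^ i * a i) (k : ℕ) : a k = n / b ^ k % b := by
  obtain ⟨B, hB⟩ := hfin.bddAbove
  have hsupp : support (fun i => b ^ i * a i) ⊆ range (max B k + 1) := fun i hi => by
    have := hB (support_mul_subset_right _ _ hi)
    simp only [coe_range, Set.mem_Iio]
    omega
  rw [hn, finsum_eq_sum_of_support_subset _ hsupp, div_pow_mod_sum_range_pow_mul ha (by omega)]

end Nat

lemma Antitone.tsub_eq_sum_Ico {g : ℕ → ℕ} (hg : Antitone g) {j m : ℕ} (h : j ≤ m) :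
    g j - g m = ∑ k ∈ Ico j m, (g k - g (k + 1)) := by
  induction m, h using Nat.le_induction with
  | base => simp
  | succ m hjm ih =>
    rw [sum_Ico_succ_top hjm, ← ih]
    have : g (m + 1) ≤ g m := hg m.le_succ
    have := hg hjm
    omega

lemma Antitone.eq_sum_Ico_of_eq_zero {g : ℕ → ℕ} (hg : Antitone g) {N : ℕ} (hN : g N = 0)
    (j : ℕ) : g j = ∑ k ∈ Ico j N, (g k - g (k + 1)) := by
  rcases le_total j N with h | h
  · rw [← hg.tsub_eq_sum_Ico h, hN, Nat.sub_zero]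
  · rw [Ico_eq_empty_of_le h, sum_empty]
    exact Nat.eq_zero_of_le_zero (hN ▸ hg h)

lemma Antitone.eq_of_tsub_succ_eq {g h : ℕ → ℕ} (hg : Antitone g) (hh : Antitone h) {N : ℕ}
    (hgN : g N = 0) (hhN : h N = 0) (hgh : ∀ k, g k - g (k + 1) = h k - h (k + 1)) : g = h :=
  funext fun j => by
    rw [hg.eq_sum_Ico_of_eq_zero hgN, hh.eq_sum_Ico_of_eq_zero hhN]
    exact sum_congr rfl fun k _ => hgh k

lemma sum_Ico_tsub_sum_Ico_succ {c : ℕ → ℕ} {N : ℕ} (hc : ∀ k, N ≤ k → c k = 0) (j : ℕ) :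
    ∑ k ∈ Ico j N, c k - ∑ k ∈ Ico (j + 1) N, c k = c j := by
  rcases lt_or_ge j N with h | h
  · rw [sum_eq_sum_Ico_succ_bot h]
    omega
  · rw [Ico_eq_empty_of_le h, Ico_eq_empty_of_le (by omega), hc j h]
    rfl

section Expansion

variable {b : ℕ} {f : ℕ → ℕ} {μ : ℕ → ℕ → ℕ}

lemma tsub_succ_eq_finsum_of_eq_finsum (hμ : ∀ i, Antitone (μ i))
    (hfin : ∀ j, HasFiniteSupport fun i => μ i j) (hf : ∀ j, f j = ∑ᶠ i, b ^ i * μ i j)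
    (k : ℕ) : f k - f (k + 1) = ∑ᶠ i, b ^ i * (μ i k - μ i (k + 1)) := by
  have hfin_sub : HasFiniteSupport fun i => b ^ i * (μ i k - μ i (k + 1)) :=
    (hfin k).subset fun i hi h0 => hi (by simp [h0])
  have hsplit : f k = f (k + 1) + ∑ᶠ i, b ^ i * (μ i k - μ i (k + 1)) := by
    rw [hf k, hf (k + 1), ← finsum_add_distrib ((hfin (k + 1)).fun_mul_right _) hfin_sub]
    exact finsum_congr fun i => by rw [← mul_add, Nat.add_sub_cancel' (hμ i k.le_succ)]
  omega

lemma tsub_succ_eq_div_pow_mod_of_eq_finsum (hμ : ∀ i, Antitone (μ i))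
    (hres : ∀ i j, μ i j - μ i (j + 1) < b) (hfin : ∀ j, HasFiniteSupport fun i => μ i j)
    (hf : ∀ j, f j = ∑ᶠ i, b ^ i * μ i j) (i k : ℕ) :
    μ i k - μ i (k + 1) = (f k - f (k + 1)) / b ^ i % b :=
  Nat.eq_div_pow_mod_of_eq_finsum (fun i => hres i k)
    ((hfin k).subset fun i hi h0 => hi (by simp [h0]))
    (tsub_succ_eq_finsum_of_eq_finsum hμ hfin hf k) i

end Expansion

/-- The partition `μ⁽ⁱ⁾` of the expansion of `f`; `N` is a cutoff with `f N = 0`. -/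
def digitPartition (b N : ℕ) (f : ℕ → ℕ) (i j : ℕ) : ℕ :=
  ∑ k ∈ Ico j N, (f k - f (k + 1)) / b ^ i % b

section DigitPartition

variable {b N : ℕ} {f : ℕ → ℕ}

lemma antitone_digitPartition (i : ℕ) : Antitone (digitPartition b N f i) :=
  fun _ _ h => sum_le_sum_of_subset (Ico_subset_Ico h le_rfl)

lemma digitPartition_eq_zero_of_le (i : ℕ) {j : ℕ} (hj : N ≤ j) : digitPartition b N f i j = 0 := by
  simp [digitPartition, Ico_eq_empty_of_le hj]

lemma digitPartition_tsub_succ (hN : ∀ k, N ≤ k → f k = 0) (i j : ℕ) :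
    digitPartition b N f i j - digitPartition b N f i (j + 1) = (f j - f (j + 1)) / b ^ i % b :=
  sum_Ico_tsub_sum_Ico_succ (fun k hk => by simp [hN k hk]) j

lemma digitPartition_eq_zero_of_ge (hb : 1 < b) (hf : Antitone f) {i : ℕ} (hi : f 0 ≤ i) (j : ℕ) :
    digitPartition b N f i j = 0 := by
  refine sum_eq_zero fun k _ => Nat.div_pow_mod_eq_zero_of_lt ?_
  calc f k - f (k + 1) ≤ f 0 := (Nat.sub_le _ _).trans (hf k.zero_le)
    _ < b ^ f 0 := Nat.lt_pow_self hb
    _ ≤ b ^ i := Nat.pow_le_pow_right (by omega) hi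

lemma finsum_pow_mul_digitPartition (hb : 1 < b) (hf : Antitone f) (hN : f N = 0) (j : ℕ) :
    ∑ᶠ i, b ^ i * digitPartition b N f i j = f j :=
  (Nat.finsum_pow_mul_sum_div_pow_mod hb _ _).trans (hf.eq_sum_Ico_of_eq_zero hN j).symm

lemma eq_digitPartition {μ : ℕ → ℕ → ℕ} (hN : ∀ k, N ≤ k → f k = 0)
    (hμ_anti : ∀ i, Antitone (μ i)) (hμ_zero : ∀ i, ∃ M, ∀ j, M ≤ j → μ i j = 0)
    (hμ_res : ∀ i j, μ i j - μ i (j + 1) < b) (hμ_fin : ∀ j, HasFiniteSupport fun i => μ i j)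
    (hf : ∀ j, f j = ∑ᶠ i, b ^ i * μ i j) : μ = digitPartition b N f := by
  funext i
  obtain ⟨Nμ, hNμ⟩ := hμ_zero i
  refine (hμ_anti i).eq_of_tsub_succ_eq (antitone_digitPartition i) (hNμ _ (le_max_left Nμ N))
    (digitPartition_eq_zero_of_le i (le_max_right _ _)) fun k => ?_
  rw [digitPartition_tsub_succ hN, tsub_succ_eq_div_pow_mod_of_eq_finsum hμ_anti hμ_res hμ_fin hf]

end DigitPartition

theorem ell_adic_expansion_of_partitions
    (ℓ : ℕ) (hℓ : ℓ.Prime)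
    (f : ℕ → ℕ) (hf_anti : Antitone f) (hf_fin : ∃ N, ∀ j, N ≤ j → f j = 0) :
    ∃! μ : ℕ → ℕ → ℕ,
      (∀ i, Antitone (μ i)) ∧
      (∀ i, ∃ N, ∀ j, N ≤ j → μ i j = 0) ∧
      (∀ i j, μ i j - μ i (j + 1) ≤ ℓ - 1) ∧
      (∃ I, ∀ i, I ≤ i → ∀ j, μ i j = 0) ∧
      (∀ j, f j = ∑ᶠ i, ℓ ^ i * μ i j) := by
  have hℓ1 := hℓ.one_lt
  obtain ⟨N, hN⟩ := hf_fin
  refine ⟨digitPartition ℓ N f, ⟨antitone_digitPartition,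
    fun i => ⟨N, fun _ => digitPartition_eq_zero_of_le i⟩, fun i j => ?_,
    ⟨f 0, fun i => digitPartition_eq_zero_of_ge hℓ1 hf_anti⟩,
    fun j => (finsum_pow_mul_digitPartition hℓ1 hf_anti (hN N le_rfl) j).symm⟩, ?_⟩
  · rw [digitPartition_tsub_succ hN]
    exact Nat.le_sub_one_of_lt (Nat.mod_lt _ (by omega))
  · rintro μ ⟨hμ_anti, hμ_zero, hμ_res, ⟨I, hI⟩, hf⟩
    have hμ_fin : ∀ j, HasFiniteSupport fun i => μ i j := fun j =>
      (Set.finite_lt_nat I).subset fun i hi => by_contra fun h => hi (hI i (not_lt.1 h) j)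
    exact eq_digitPartition hN hμ_anti hμ_zero (fun i j => by have := hμ_res i j; omega)
      hμ_fin hf
end

section
/- Let ℓ be a prime and n a nonnegative integer. Then the number p(n) of partitions of n equals the sum, over all partitions ν of n into powers of ℓ, of the product over i ≥ 0 of the number of ℓ-regular partitions of m_{ℓ^i}(ν), where m_{ℓ^i}(ν) denotes the multiplicity of ℓ^i as a part of ν (and the number of ℓ-regular partitions of 0 is 1). In symbols: p(n) = Σ_{ν ∈ Part(n,ℓ)} Π_{i≥0} r_ℓ(m_{ℓ^i}(ν)), where r_ℓ(m) is the number of ℓ-regular partitions of m. -/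
/-!
Write every multiplicity of a partition `λ` of `n` in base `ℓ`, `m_a(λ) = ∑ᵢ ℓⁱ dᵢ(a)`. The
digits `dᵢ(a) < ℓ` are the multiplicities of an `ℓ`-regular partition `λ⁽ⁱ⁾`, and `λ` is recovered
as `∑ᵢ ℓⁱ • λ⁽ⁱ⁾` (every part of `λ⁽ⁱ⁾` repeated `ℓⁱ` times). The sizes `|λ⁽ⁱ⁾|` are the
multiplicities of an `ℓ`-power partition `ν` of `n`, and by uniqueness of base-`ℓ` expansions
`λ ↦ (ν, (λ⁽ⁱ⁾)ᵢ)` is a bijection onto the pairs of an `ℓ`-power partition `ν` and `ℓ`-regular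
partitions of the multiplicities `m_{ℓⁱ}(ν)`.
-/

/-- The number of ℓ-regular partitions of `m`. -/
noncomputable def regularPartitionCount (ℓ m : ℕ) : ℕ :=
  Nat.card {μ : Nat.Partition m // ∀ a : ℕ, Multiset.count a μ.parts < ℓ}

namespace Multiset

variable {α : Type*} [DecidableEq α]

noncomputable def digitSlice (b i : ℕ) (s : Multiset α) : Multiset α :=
  Finsupp.toMultiset (s.toFinsupp.mapRange (· / b ^ i % b) (by simp))

@[simp] lemma count_digitSlice (b i : ℕ) (s : Multiset α) (a : α) :
    (s.digitSlice b i).count a = s.count a / b ^ i % b := by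
  simp [digitSlice]

lemma mem_of_mem_digitSlice {b i : ℕ} {s : Multiset α} {a : α} (h : a ∈ s.digitSlice b i) :
    a ∈ s := by
  contrapose! h
  simp [← count_eq_zero, count_eq_zero.mpr h]

lemma sum_pow_smul_digitSlice {b N : ℕ} {s : Multiset α} (hs : ∀ a, s.count a < b ^ N) :
    ∑ i : Fin N, b ^ (i : ℕ) • s.digitSlice b i = s := by
  ext a
  have h := finFunctionFinEquiv_apply (finFunctionFinEquiv.symm ⟨s.count a, hs a⟩)
  rw [Equiv.apply_symm_apply] at h
  simpa [count_sum', mul_comm] using h.symm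

lemma digitSlice_sum_pow_smul {b N : ℕ} {t : Fin N → Multiset α}
    (ht : ∀ i a, (t i).count a < b) (j : Fin N) :
    (∑ i : Fin N, b ^ (i : ℕ) • t i).digitSlice b j = t j := by
  ext a
  have h := finFunctionFinEquiv_symm_apply_val
    (finFunctionFinEquiv fun i => ⟨(t i).count a, ht i a⟩) j
  rw [Equiv.symm_apply_apply] at h
  simpa [count_sum', finFunctionFinEquiv_apply, mul_comm] using h.symm

end Multiset

lemma regularPartitionCount_zero {ℓ : ℕ} (hℓ : 0 < ℓ) : regularPartitionCount ℓ 0 = 1 :=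
  Nat.card_eq_one_iff_unique.mpr ⟨inferInstance, ⟨⟨default, fun _ => by simpa using hℓ⟩⟩⟩

namespace Nat.Partition

variable {ℓ n N : ℕ}

abbrev PowerPartition (ℓ n : ℕ) : Type :=
  {ν : Nat.Partition n // ∀ c ∈ ν.parts, ∃ i : ℕ, c = ℓ ^ i}

abbrev RegularPartition (ℓ m : ℕ) : Type :=
  {μ : Nat.Partition m // ∀ a : ℕ, Multiset.count a μ.parts < ℓ}

/-- Exponents `i > n` are left out: `ℓ ^ i` is then too large to be a part. -/
abbrev DecoratedPowerPartition (ℓ n : ℕ) : Type :=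
  Σ ν : PowerPartition ℓ n, ∀ i : Fin (n + 1), RegularPartition ℓ (ν.1.parts.count (ℓ ^ (i : ℕ)))

lemma DecoratedPowerPartition.ext {x y : DecoratedPowerPartition ℓ n}
    (h₁ : x.1.1.parts = y.1.1.parts) (h₂ : ∀ i, (x.2 i).1.parts = (y.2 i).1.parts) : x = y := by
  obtain ⟨⟨ν, hν⟩, μ⟩ := x
  obtain ⟨⟨ν', hν'⟩, μ'⟩ := y
  obtain rfl : ν = ν' := Nat.Partition.ext h₁
  congr
  funext i
  exact Subtype.ext (Nat.Partition.ext (h₂ i))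

lemma count_parts_le (p : Nat.Partition n) (a : ℕ) : p.parts.count a ≤ n :=
  calc p.parts.count a ≤ Multiset.card p.parts := Multiset.count_le_card a _
    _ = Multiset.card p.parts • 1 := by simp
    _ ≤ p.parts.sum := Multiset.card_nsmul_le_sum fun _ hx => p.parts_pos hx
    _ = n := p.parts_sum

lemma count_parts_lt_pow (hℓ : 1 < ℓ) (p : Nat.Partition n) (a : ℕ) :
    p.parts.count a < ℓ ^ (n + 1) := by
  have := Nat.lt_pow_self (n := n + 1) hℓ
  have := count_parts_le p a
  omega

lemma count_pow_parts_eq_zero (hℓ : 1 < ℓ) (p : Nat.Partition n) {i : ℕ} (hi : n < i) :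
    p.parts.count (ℓ ^ i) = 0 :=
  Multiset.count_eq_zero.mpr fun h =>
    (p.le_of_mem_parts h).not_gt (hi.trans (Nat.lt_pow_self hℓ))

lemma mulSupport_regularPartitionCount_count_pow_subset (hℓ : 1 < ℓ) (p : Nat.Partition n) :
    Function.mulSupport (fun i => regularPartitionCount ℓ (p.parts.count (ℓ ^ i))) ⊆
      Finset.range (n + 1) := by
  intro i hi
  by_contra hin
  rw [Finset.coe_range, Set.mem_Iio, not_lt] at hin
  refine hi ?_
  dsimp only
  rw [count_pow_parts_eq_zero hℓ p hin, regularPartitionCount_zero (by omega)]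

def powParts (ℓ : ℕ) (c : Fin N → ℕ) : Multiset ℕ :=
  ∑ i, Multiset.replicate (c i) (ℓ ^ (i : ℕ))

lemma count_pow_powParts (hℓ : 1 < ℓ) (c : Fin N → ℕ) (j : Fin N) :
    (powParts ℓ c).count (ℓ ^ (j : ℕ)) = c j := by
  simp [powParts, Multiset.count_sum', Multiset.count_replicate,
    (Nat.pow_right_injective hℓ).eq_iff, Fin.val_inj]

lemma exists_eq_pow_of_mem_powParts {c : Fin N → ℕ} {a : ℕ} (h : a ∈ powParts ℓ c) :
    ∃ i : Fin N, a = ℓ ^ (i : ℕ) := by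
  simp only [powParts, Multiset.mem_sum, Finset.mem_univ, true_and] at h
  obtain ⟨i, hi⟩ := h
  exact ⟨i, Multiset.eq_of_mem_replicate hi⟩

lemma sum_powParts (c : Fin N → ℕ) : (powParts ℓ c).sum = ∑ i, c i * ℓ ^ (i : ℕ) := by
  simp [powParts, Multiset.sum_sum]

lemma powParts_count_pow (hℓ : 1 < ℓ) (ν : PowerPartition ℓ n) :
    powParts ℓ (fun i : Fin (n + 1) => ν.1.parts.count (ℓ ^ (i : ℕ))) = ν.1.parts := by
  ext a
  by_cases ha : ∃ i : Fin (n + 1), a = ℓ ^ (i : ℕ)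
  · obtain ⟨i, rfl⟩ := ha
    exact count_pow_powParts hℓ _ i
  · have hν : a ∉ ν.1.parts := by
      intro hmem
      obtain ⟨i, rfl⟩ := ν.2 a hmem
      have hi : i < n + 1 := by
        have := (Nat.lt_pow_self hℓ).trans_le (ν.1.le_of_mem_parts hmem)
        omega
      exact ha ⟨⟨i, hi⟩, rfl⟩
    rw [Multiset.count_eq_zero_of_notMem hν]
    exact Multiset.count_eq_zero.mpr fun h => ha (exists_eq_pow_of_mem_powParts h)

noncomputable def powerPartitionOfSlices (hℓ : 1 < ℓ) (p : Nat.Partition n) :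
    PowerPartition ℓ n :=
  ⟨{ parts := powParts ℓ fun i : Fin (n + 1) => (p.parts.digitSlice ℓ i).sum
     parts_pos := fun h => by
       obtain ⟨i, rfl⟩ := exists_eq_pow_of_mem_powParts h
       positivity
     parts_sum := by
       rw [sum_powParts]
       conv_rhs =>
         rw [← p.parts_sum, ← Multiset.sum_pow_smul_digitSlice (count_parts_lt_pow hℓ p)]
       simp [Multiset.sum_sum, Multiset.sum_nsmul, mul_comm] },
   fun _ h => ⟨_, (exists_eq_pow_of_mem_powParts h).choose_spec⟩⟩

noncomputable def toDecoratedPowerPartition (hℓ : 1 < ℓ) (p : Nat.Partition n) :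
    DecoratedPowerPartition ℓ n :=
  ⟨powerPartitionOfSlices hℓ p, fun i =>
    ⟨{ parts := p.parts.digitSlice ℓ i
       parts_pos := fun h => p.parts_pos (Multiset.mem_of_mem_digitSlice h)
       parts_sum :=
         (count_pow_powParts hℓ (fun j : Fin (n + 1) => (p.parts.digitSlice ℓ j).sum) i).symm },
     fun _ => by simpa using Nat.mod_lt _ (by omega)⟩⟩

def ofDecoratedPowerPartition (hℓ : 1 < ℓ) (x : DecoratedPowerPartition ℓ n) :
    Nat.Partition n where
  parts := ∑ i : Fin (n + 1), ℓ ^ (i : ℕ) • (x.2 i).1.parts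
  parts_pos h := by
    obtain ⟨i, -, hi⟩ := Multiset.mem_sum.mp h
    exact (x.2 i).1.parts_pos (Multiset.mem_of_mem_nsmul hi)
  parts_sum := by
    conv_rhs => rw [← x.1.1.parts_sum, ← powParts_count_pow hℓ x.1, sum_powParts]
    simp [Multiset.sum_sum, Multiset.sum_nsmul, (x.2 _).1.parts_sum, mul_comm]

noncomputable def equivDecoratedPowerPartition (hℓ : 1 < ℓ) (n : ℕ) :
    Nat.Partition n ≃ DecoratedPowerPartition ℓ n where
  toFun := toDecoratedPowerPartition hℓ
  invFun := ofDecoratedPowerPartition hℓ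
  left_inv p := Nat.Partition.ext (Multiset.sum_pow_smul_digitSlice (count_parts_lt_pow hℓ p))
  right_inv x := by
    have hslice (i : Fin (n + 1)) :
        (ofDecoratedPowerPartition hℓ x).parts.digitSlice ℓ i = (x.2 i).1.parts :=
      Multiset.digitSlice_sum_pow_smul (fun j => (x.2 j).2) i
    refine DecoratedPowerPartition.ext ?_ hslice
    change powParts ℓ _ = _
    simp_rw [hslice, (x.2 _).1.parts_sum]
    exact powParts_count_pow hℓ x.1

end Nat.Partition

theorem partition_count_eq_sum_over_ell_power_partitions (ℓ n : ℕ) (hℓ : ℓ.Prime) :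
    Nat.card (Nat.Partition n) =
      ∑ᶠ ν : {ν : Nat.Partition n // ∀ c ∈ ν.parts, ∃ i : ℕ, c = ℓ ^ i},
        ∏ᶠ i : ℕ, regularPartitionCount ℓ (Multiset.count (ℓ ^ i) ν.1.parts) := by
  classical
  rw [Nat.card_congr (Nat.Partition.equivDecoratedPowerPartition hℓ.one_lt n), Nat.card_sigma,
    finsum_eq_sum_of_fintype]
  refine Finset.sum_congr rfl fun ν _ => ?_
  rw [Nat.card_pi, finprod_eq_prod_of_mulSupport_subset _
      (Nat.Partition.mulSupport_regularPartitionCount_count_pow_subset hℓ.one_lt ν.1),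
    ← Fin.prod_univ_eq_prod_range]
  rfl
end

section
/- Let ℓ be a prime and n ≥ 2 an integer. Some Sylow ℓ-subgroup of the symmetric group S_n (equivalently, every Sylow ℓ-subgroup) is contained in a proper Young subgroup of S_n if and only if n is not a power of ℓ. Here a Young subgroup of S_n is the subgroup of all permutations of {1,…,n} preserving each block of a fixed set partition of {1,…,n}, and it is proper when the set partition has at least two blocks. (This is the symmetric-group case of the criterion: the pair (𝒪_reg, 𝕜) is cuspidal for the reductive group G in characteristic ℓ if and only if no proper parabolic subgroup of the Weyl group W contains an ℓ-Sylow subgroup of W.) -/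
/-!
Some Sylow `ℓ`-subgroup of a finite group `G` lies in a subgroup `H` exactly when `ℓ` does not
divide `[G : H]`. The Young subgroup with block sizes `aᵢ` has index the multinomial
coefficient `n! / ∏ aᵢ!`, which is divisible by every binomial coefficient `n.choose aᵢ`.
If `n = ℓ ^ i`, each `(ℓ ^ i).choose a` with `0 < a < ℓ ^ i` is divisible by `ℓ`. Otherwise let
`ℓ ^ k` be the largest power of `ℓ` that is at most `n`: the two-block Young subgroup with blocks
of sizes `ℓ ^ k` and `n - ℓ ^ k` has index `n.choose (ℓ ^ k)`, which is prime to `ℓ` by Kummer's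
theorem.
-/

open Finset Nat

/-- The Young subgroup of `Equiv.Perm (Fin n)` associated to the set partition of
`Fin n` whose blocks are the nonempty fibers of `c`: all permutations preserving each
block. -/
def youngSubgroup (n : ℕ) (c : Fin n → Fin n) : Subgroup (Equiv.Perm (Fin n)) where
  carrier := {σ : Equiv.Perm (Fin n) | ∀ x, c (σ x) = c x}
  one_mem' := fun _ => rfl
  mul_mem' := by
    intro σ τ hσ hτ x
    have : c (σ (τ x)) = c (τ x) := hσ (τ x)
    simpa [Equiv.Perm.mul_apply, hτ x] using this
  inv_mem' := by
    intro σ hσ x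
    have := hσ (σ⁻¹ x)
    simpa using this.symm

theorem Sylow.exists_le_iff_not_dvd_index {G : Type*} [Group G] [Finite G] {p : ℕ}
    [Fact p.Prime] (H : Subgroup G) :
    (∃ P : Sylow p G, (P : Subgroup G) ≤ H) ↔ ¬ p ∣ H.index := by
  constructor
  · rintro ⟨P, hPH⟩ hp
    exact P.not_dvd_index (hp.trans (Subgroup.index_dvd_of_le hPH))
  · intro hH
    obtain ⟨Q⟩ : Nonempty (Sylow p H) := inferInstance
    have hQ : ¬ p ∣ (Q.map H.subtype).index := by
      rw [Subgroup.index_map_subtype]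
      exact Nat.Prime.not_dvd_mul Fact.out Q.not_dvd_index hH
    exact ⟨(Q.2.map H.subtype).toSylow hQ, Subgroup.map_subtype_le _⟩

theorem Nat.Prime.not_dvd_choose_pow_log {p n : ℕ} (hp : p.Prime) (hn : n ≠ 0) :
    ¬ p ∣ n.choose (p ^ Nat.log p n) := by
  set k := Nat.log p n
  have hkn : p ^ k ≤ n := Nat.pow_log_le_self p hn
  -- Kummer: adding `p ^ k` to `n - p ^ k` in base `p` produces no carry, since `p ^ k` has
  -- zero digits below position `k` and `n < p ^ (k + 1)`.
  have hno_carry : (n.choose (p ^ k)).factorization p = 0 := by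
    rw [factorization_choose hp hkn (lt_succ_self k), Finset.card_eq_zero, filter_eq_empty_iff]
    intro i hi
    have hik : p ^ i ∣ p ^ k := pow_dvd_pow p (Nat.lt_succ_iff.1 (mem_Ico.1 hi).2)
    rw [Nat.mod_eq_zero_of_dvd hik, zero_add, not_le]
    exact mod_lt _ (pow_pos hp.pos i)
  rw [hp.dvd_iff_one_le_factorization (choose_pos hkn).ne', hno_carry]
  omega

theorem Fintype.sum_card_fiber {α ι : Type*} [Fintype α] [Fintype ι] [DecidableEq ι]
    (f : α → ι) : ∑ i, Fintype.card {x // f x = i} = Fintype.card α := by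
  rw [← Fintype.card_sigma, Fintype.card_congr (Equiv.sigmaFiberEquiv f)]

section youngSubgroup

variable {n : ℕ} (c : Fin n → Fin n)

theorem card_youngSubgroup :
    Nat.card (youngSubgroup n c) = ∏ i, (Fintype.card {x // c x = i})! := by
  rw [← DomMulAct.stabilizer_card c, ← Nat.card_eq_fintype_card]
  exact Nat.card_congr (Equiv.subtypeEquivRight fun σ => funext_iff.symm)

theorem index_youngSubgroup :
    (youngSubgroup n c).index = multinomial univ fun i => Fintype.card {x // c x = i} := by
  have hcard := (youngSubgroup n c).card_mul_index
  rw [card_youngSubgroup, Nat.card_perm, Nat.card_eq_fintype_card, Fintype.card_fin] at hcard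
  have hspec := multinomial_spec univ fun i => Fintype.card {x // c x = i}
  rw [Fintype.sum_card_fiber, Fintype.card_fin] at hspec
  exact Nat.eq_of_mul_eq_mul_left (by positivity) (hcard.trans hspec.symm)

theorem choose_card_fiber_dvd_index_youngSubgroup (i : Fin n) :
    n.choose (Fintype.card {x // c x = i}) ∣ (youngSubgroup n c).index := by
  rw [index_youngSubgroup, ← insert_erase (mem_univ i), multinomial_insert (notMem_erase i _),
    add_sum_erase univ (fun i => Fintype.card {x // c x = i}) (mem_univ i),
    Fintype.sum_card_fiber, Fintype.card_fin]
  exact dvd_mul_right _ _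

end youngSubgroup

theorem index_youngSubgroup_ite {n : ℕ} (s : Finset (Fin n)) {i j : Fin n} (hij : i ≠ j) :
    (youngSubgroup n fun x => if x ∈ s then i else j).index = n.choose s.card := by
  set c : Fin n → Fin n := fun x => if x ∈ s then i else j
  have hcard_i : Fintype.card {x // c x = i} = s.card := by
    simp [c, Fintype.card_subtype, hij.symm]
  have hcard_other : ∀ k ∈ univ \ {i, j}, Fintype.card {x // c x = k} = 0 := by
    intro k hk
    simp only [mem_sdiff, mem_insert, mem_singleton, mem_univ, true_and, not_or] at hk
    refine Fintype.card_eq_zero_iff.2 ⟨fun ⟨x, hx⟩ => ?_⟩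
    unfold c at hx
    split_ifs at hx
    exacts [hk.1 hx.symm, hk.2 hx.symm]
  have hcard_sum : Fintype.card {x // c x = i} + Fintype.card {x // c x = j} = n := by
    calc _ = ∑ k ∈ {i, j}, Fintype.card {x // c x = k} := (sum_pair hij).symm
      _ = ∑ k, Fintype.card {x // c x = k} :=
        sum_subset (subset_univ _) fun k _ hk => hcard_other k (mem_sdiff.2 ⟨mem_univ k, hk⟩)
      _ = n := by rw [Fintype.sum_card_fiber, Fintype.card_fin]
  rw [index_youngSubgroup,
    ← multinomial_congr_of_sdiff (subset_univ {i, j}) hcard_other fun _ _ => rfl,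
    binomial_eq_choose hij, hcard_sum, hcard_i]

theorem sylow_in_proper_young_iff_not_prime_power
    (ℓ n : ℕ) (hℓ : ℓ.Prime) (hn : 2 ≤ n) :
    (∃ (c : Fin n → Fin n) (Q : Sylow ℓ (Equiv.Perm (Fin n))),
        (∃ x y : Fin n, c x ≠ c y) ∧
        (Q : Subgroup (Equiv.Perm (Fin n))) ≤ youngSubgroup n c) ↔
      ¬ ∃ i : ℕ, n = ℓ ^ i := by
  have := Fact.mk hℓ
  constructor
  · rintro ⟨c, Q, ⟨x, y, hxy⟩, hQ⟩ ⟨i, rfl⟩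
    have hblock_pos : Fintype.card {z // c z = c x} ≠ 0 :=
      (Fintype.card_pos_iff.2 ⟨⟨x, rfl⟩⟩).ne'
    have hblock_lt : Fintype.card {z // c z = c x} < ℓ ^ i := by
      simpa using Fintype.card_subtype_lt (p := fun z => c z = c x) (x := y) (Ne.symm hxy)
    exact (Sylow.exists_le_iff_not_dvd_index _).1 ⟨Q, hQ⟩
      ((hℓ.dvd_choose_pow hblock_pos hblock_lt.ne).trans
        (choose_card_fiber_dvd_index_youngSubgroup c (c x)))
  · intro hpow
    have hle : ℓ ^ Nat.log ℓ n ≤ n := Nat.pow_log_le_self ℓ (by omega)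
    have hlt : ℓ ^ Nat.log ℓ n < n := hle.lt_of_ne fun h => hpow ⟨_, h.symm⟩
    obtain ⟨s, -, hs⟩ := exists_subset_card_eq (s := (univ : Finset (Fin n))) (by simpa using hle)
    have h01 : (⟨0, by omega⟩ : Fin n) ≠ ⟨1, by omega⟩ := by simp
    obtain ⟨Q, hQ⟩ := (Sylow.exists_le_iff_not_dvd_index _).2 <| by
      rw [index_youngSubgroup_ite s h01, hs]
      exact hℓ.not_dvd_choose_pow_log (by omega)
    obtain ⟨x, hx⟩ : s.Nonempty := card_pos.1 (hs ▸ pow_pos hℓ.pos _)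
    obtain ⟨y, hy⟩ : ∃ y, y ∉ s := by
      by_contra! h
      rw [eq_univ_iff_forall.2 h, Finset.card_fin] at hs
      omega
    exact ⟨_, Q, ⟨x, y, by simp [hx, hy]⟩, hQ⟩
end

section
/- Let ℓ be a prime and n a positive integer. Let ν be a multiset of positive integers with sum n such that ℓ does not divide the multinomial coefficient n! / Π_{c ∈ ν} c!, and such that ν is minimal with this property with respect to refinement: for every proper refinement ν′ of ν, ℓ divides n! / Π_{c ∈ ν′} c!. Then ν equals the multiset ν(n) consisting of each ℓ-power ℓ^i repeated a_i times, where n = Σ_{i≥0} a_i ℓ^i is the base-ℓ expansion of n (0 ≤ a_i ≤ ℓ − 1). (This is the symmetric-group case of the uniqueness assertion in Theorem 4.5 of the paper: there is a unique conjugacy class of Levi subgroups of G minimal subject to ℓ ∤ |W/W_L|, and for GL(n) it corresponds to the partition ν(n).) -/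
/-!
Write `s(c)` for the base-`ℓ` digit sum of `c`. By Legendre's formula
`(ℓ - 1) · v_ℓ(n! / ∏ c!) = ∑_{c ∈ ν} s(c) - s(n)`, so `ℓ ∤ n! / ∏ c!` says exactly that the digit
sums of the parts add up to `s(n)`, their least possible total. Splitting every part `c` into
`ν(c)` keeps that total, so this refinement is again `ℓ`-indivisible, and minimality forces all
parts of `ν` to be powers of `ℓ`. The total of a multiset of `ℓ`-powers is its cardinality; merging
`ℓ` equal parts `ℓ ^ i` into `ℓ ^ (i + 1)` would push it below `s(n)`, so each `ℓ ^ i` occurs fewer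
than `ℓ` times, and uniqueness of base-`ℓ` expansions gives `ν = ν(n)`.
-/

/-- The multiset ν(n) containing, for each i, the ℓ-power ℓ^i with multiplicity the
i-th base-ℓ digit of n. -/
def ellPowerPartition (ℓ n : ℕ) : Multiset ℕ :=
  (Finset.range (Nat.digits ℓ n).length).sum
    (fun i => Multiset.replicate ((Nat.digits ℓ n).getD i 0) (ℓ ^ i))

open Nat

def digitsMultiset (b : ℕ) (L : List ℕ) : Multiset ℕ :=
  ∑ i ∈ Finset.range L.length, Multiset.replicate (L.getD i 0) (b ^ i)

theorem ellPowerPartition_eq_digitsMultiset (ℓ n : ℕ) :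
    ellPowerPartition ℓ n = digitsMultiset ℓ (digits ℓ n) := rfl

section digitsMultiset

variable {b : ℕ}

@[simp]
theorem digitsMultiset_nil : digitsMultiset b [] = 0 := rfl

theorem digitsMultiset_cons (d : ℕ) (L : List ℕ) :
    digitsMultiset b (d :: L) = .replicate d 1 + (digitsMultiset b L).map (b * ·) := by
  rw [digitsMultiset, digitsMultiset, List.length_cons, Finset.sum_range_succ', add_comm,
    ← Multiset.coe_mapAddMonoidHom, map_sum]
  simp [Multiset.map_replicate, _root_.pow_succ']

theorem sum_digitsMultiset (L : List ℕ) : (digitsMultiset b L).sum = ofDigits b L := by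
  induction L with
  | nil => rfl
  | cons d L ih =>
    have hmul : ((digitsMultiset b L).map (b * ·)).sum = b * (digitsMultiset b L).sum := by
      simpa using Multiset.sum_map_mul_left (s := digitsMultiset b L) (f := id) (a := b)
    rw [digitsMultiset_cons, Multiset.sum_add, hmul, ih, ofDigits_cons, Multiset.sum_replicate,
      smul_eq_mul, mul_one]

theorem card_digitsMultiset (L : List ℕ) : (digitsMultiset b L).card = L.sum := by
  induction L with
  | nil => rfl
  | cons d L ih => simp [digitsMultiset_cons, ih]

theorem exists_eq_pow_of_mem_digitsMultiset {L : List ℕ} {x : ℕ} (hx : x ∈ digitsMultiset b L) :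
    ∃ i, x = b ^ i := by
  obtain ⟨i, -, hi⟩ := Multiset.mem_sum.mp hx
  exact ⟨i, Multiset.eq_of_mem_replicate hi⟩

theorem count_pow_digitsMultiset (hb : 1 < b) (L : List ℕ) (i : ℕ) :
    (digitsMultiset b L).count (b ^ i) = L.getD i 0 := by
  have hinj := Nat.pow_right_injective hb
  simp only [digitsMultiset, Multiset.count_sum', Multiset.count_replicate, hinj.eq_iff,
    Finset.sum_ite_eq', Finset.mem_range]
  split_ifs with hi
  · rfl
  · exact (List.getD_eq_default _ _ (not_lt.mp hi)).symm

theorem digitsMultiset_append_replicate_zero (L : List ℕ) (k : ℕ) :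
    digitsMultiset b (L ++ .replicate k 0) = digitsMultiset b L := by
  induction L with
  | nil =>
    induction k with
    | zero => rfl
    | succ k ih => simp_all [List.replicate_succ, digitsMultiset_cons]
  | cons d L ih => simp [digitsMultiset_cons, ih]

theorem digitsMultiset_digits_ofDigits (hb : 1 < b) {L : List ℕ} (hL : ∀ x ∈ L, x < b) :
    digitsMultiset b (digits b (ofDigits b L)) = digitsMultiset b L := by
  have h := (setInvOn_digitsAppend_ofDigits hb L.length).1 ⟨rfl, hL⟩
  conv_rhs => rw [← h]
  rw [digitsAppend, digitsMultiset_append_replicate_zero]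

theorem eq_of_forall_count_pow_eq {μ ν : Multiset ℕ} (hμ : ∀ x ∈ μ, ∃ i, x = b ^ i)
    (hν : ∀ x ∈ ν, ∃ i, x = b ^ i) (h : ∀ i, μ.count (b ^ i) = ν.count (b ^ i)) : μ = ν := by
  ext x
  by_cases hx : ∃ i, x = b ^ i
  · obtain ⟨i, rfl⟩ := hx
    exact h i
  · rw [Multiset.count_eq_zero.mpr fun hm => hx (hμ x hm),
      Multiset.count_eq_zero.mpr fun hm => hx (hν x hm)]

theorem eq_ellPowerPartition_sum (hb : 1 < b) {ν : Multiset ℕ}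
    (hpow : ∀ x ∈ ν, ∃ i, x = b ^ i) (hcount : ∀ i, ν.count (b ^ i) < b) :
    ν = ellPowerPartition b ν.sum := by
  rw [ellPowerPartition_eq_digitsMultiset]
  set L := (List.range (ν.sum + 1)).map fun i => ν.count (b ^ i)
  have hexp : ∀ i, b ^ i ∈ ν → i < ν.sum + 1 := fun i hi =>
    Nat.lt_succ_of_le ((Nat.lt_pow_self hb).le.trans (Multiset.le_sum_of_mem hi))
  have hνL : ν = digitsMultiset b L := by
    refine eq_of_forall_count_pow_eq hpow (fun _ => exists_eq_pow_of_mem_digitsMultiset)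
      fun i => ?_
    rw [count_pow_digitsMultiset hb]
    by_cases hi : i < ν.sum + 1
    · simp [L, hi]
    · rw [List.getD_eq_default _ _ (by simpa [L] using hi),
        Multiset.count_eq_zero.mpr fun hm => hi (hexp i hm)]
  have hL : ∀ x ∈ L, x < b := by
    simp only [L, List.mem_map]
    rintro _ ⟨i, -, rfl⟩
    exact hcount i
  calc ν = digitsMultiset b L := hνL
    _ = digitsMultiset b (digits b (ofDigits b L)) := (digitsMultiset_digits_ofDigits hb hL).symm
    _ = digitsMultiset b (digits b ν.sum) := by rw [hνL, sum_digitsMultiset]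

end digitsMultiset

theorem Multiset.multinomial_mul_prod_factorial (m : Multiset ℕ) :
    m.multinomial * (m.map factorial).prod = m.sum ! := by
  induction m using Multiset.induction with
  | empty => simp
  | cons x m ih =>
    rw [multinomial_cons, Multiset.map_cons, Multiset.prod_cons, Multiset.sum_cons,
      ← add_choose_mul_factorial_mul_factorial, ← ih, add_comm x, Nat.choose_symm_add]
    ring

theorem Multiset.multinomial_eq_div (m : Multiset ℕ) :
    m.multinomial = m.sum ! / (m.map factorial).prod :=
  Nat.eq_div_of_mul_eq_left (Multiset.prod_ne_zero (by simp [factorial_ne_zero]))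
    m.multinomial_mul_prod_factorial

section Legendre

variable {ℓ : ℕ} [Fact ℓ.Prime]

theorem sub_one_mul_padicValNat_factorial_add_digits_sum (n : ℕ) :
    (ℓ - 1) * padicValNat ℓ n ! + (digits ℓ n).sum = n := by
  rw [sub_one_mul_padicValNat_factorial, Nat.sub_add_cancel (digit_sum_le ℓ n)]

theorem sub_one_mul_padicValNat_prod_factorial_add (ν : Multiset ℕ) :
    (ℓ - 1) * padicValNat ℓ (ν.map factorial).prod + (ν.map fun c => (digits ℓ c).sum).sum =
      ν.sum := by
  induction ν using Multiset.induction with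
  | empty => simp
  | cons c ν ih =>
    have hc := sub_one_mul_padicValNat_factorial_add_digits_sum (ℓ := ℓ) c
    simp only [Multiset.map_cons, Multiset.prod_cons, Multiset.sum_cons]
    rw [padicValNat.mul (factorial_ne_zero c)
      (Multiset.prod_ne_zero (by simp [factorial_ne_zero])), mul_add]
    omega

theorem sub_one_mul_padicValNat_multinomial_add (ν : Multiset ℕ) :
    (ℓ - 1) * padicValNat ℓ ν.multinomial + (digits ℓ ν.sum).sum =
      (ν.map fun c => (digits ℓ c).sum).sum := by
  have hsum := sub_one_mul_padicValNat_factorial_add_digits_sum (ℓ := ℓ) ν.sum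
  have hprod := sub_one_mul_padicValNat_prod_factorial_add (ℓ := ℓ) ν
  rw [← ν.multinomial_mul_prod_factorial, padicValNat.mul ν.multinomial_pos.ne'
    (Multiset.prod_ne_zero (by simp [factorial_ne_zero])), mul_add] at hsum
  omega

theorem digits_sum_sum_le (ν : Multiset ℕ) :
    (digits ℓ ν.sum).sum ≤ (ν.map fun c => (digits ℓ c).sum).sum :=
  (sub_one_mul_padicValNat_multinomial_add ν).le.trans' (le_add_left _ _)

theorem not_dvd_multinomial_iff (ν : Multiset ℕ) :
    ¬ ℓ ∣ ν.multinomial ↔ (ν.map fun c => (digits ℓ c).sum).sum = (digits ℓ ν.sum).sum := by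
  have hℓ : 1 < ℓ := (Fact.out : ℓ.Prime).one_lt
  rw [dvd_iff_padicValNat_ne_zero ν.multinomial_pos.ne', not_not,
    ← sub_one_mul_padicValNat_multinomial_add ν, add_eq_right, mul_eq_zero]
  omega

end Legendre

section Powers

variable {b : ℕ}

theorem digits_sum_pow (hb : 1 < b) (i : ℕ) : (digits b (b ^ i)).sum = 1 := by
  rw [← mul_one (b ^ i), digits_base_pow_mul hb one_pos, digits_of_lt b 1 one_ne_zero hb]
  simp

theorem sum_map_digits_sum_eq_card (hb : 1 < b) {ν : Multiset ℕ}
    (hν : ∀ x ∈ ν, ∃ i, x = b ^ i) : (ν.map fun c => (digits b c).sum).sum = ν.card := by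
  rw [Multiset.map_congr rfl fun x hx => ?_, Multiset.map_const', Multiset.sum_replicate,
    smul_eq_mul, mul_one]
  obtain ⟨i, rfl⟩ := hν x hx
  exact digits_sum_pow hb i

theorem sum_ellPowerPartition (b n : ℕ) : (ellPowerPartition b n).sum = n := by
  rw [ellPowerPartition_eq_digitsMultiset, sum_digitsMultiset, ofDigits_digits]

theorem sum_bind_ellPowerPartition (b : ℕ) (ν : Multiset ℕ) :
    (ν.bind (ellPowerPartition b)).sum = ν.sum := by
  simp only [Multiset.sum_bind, sum_ellPowerPartition, Multiset.map_id']

theorem map_sum_map_ellPowerPartition (b : ℕ) (ν : Multiset ℕ) :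
    (ν.map (ellPowerPartition b)).map Multiset.sum = ν := by
  simp only [Multiset.map_map, Function.comp_def, sum_ellPowerPartition, Multiset.map_id']

theorem sum_map_digits_sum_ellPowerPartition (hb : 1 < b) (n : ℕ) :
    ((ellPowerPartition b n).map fun c => (digits b c).sum).sum = (digits b n).sum := by
  rw [ellPowerPartition_eq_digitsMultiset,
    sum_map_digits_sum_eq_card hb fun _ => exists_eq_pow_of_mem_digitsMultiset,
    card_digitsMultiset]

end Powers

section Multinomial

variable {ℓ : ℕ} [Fact ℓ.Prime]

theorem not_dvd_multinomial_bind_ellPowerPartition_iff {ν : Multiset ℕ} :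
    ¬ ℓ ∣ (ν.bind (ellPowerPartition ℓ)).multinomial ↔ ¬ ℓ ∣ ν.multinomial := by
  have hℓ : 1 < ℓ := (Fact.out : ℓ.Prime).one_lt
  rw [not_dvd_multinomial_iff, not_dvd_multinomial_iff, sum_bind_ellPowerPartition,
    Multiset.map_bind, Multiset.sum_bind]
  simp only [sum_map_digits_sum_ellPowerPartition hℓ]

/-- Merging `ℓ` copies of `ℓ ^ i` into one `ℓ ^ (i + 1)` keeps the sum but lowers the digit-sum
total by `ℓ - 1`, below its lower bound `(digits ℓ ν.sum).sum`. -/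
theorem count_pow_lt_of_not_dvd_multinomial {ν : Multiset ℕ} (hν : ∀ x ∈ ν, ∃ i, x = ℓ ^ i)
    (hnotdvd : ¬ ℓ ∣ ν.multinomial) (i : ℕ) : ν.count (ℓ ^ i) < ℓ := by
  have hℓ : 1 < ℓ := (Fact.out : ℓ.Prime).one_lt
  by_contra! hcount
  obtain ⟨ρ, rfl⟩ := Multiset.le_iff_exists_add.mp (Multiset.le_count_iff_replicate_le.mp hcount)
  set merged := ℓ ^ (i + 1) ::ₘ ρ
  have hmerged : ∀ x ∈ merged, ∃ j, x = ℓ ^ j := by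
    simp only [merged, Multiset.mem_cons]
    rintro x (rfl | hx)
    · exact ⟨i + 1, rfl⟩
    · exact hν x (Multiset.mem_add.mpr (Or.inr hx))
  have hsum : merged.sum = (.replicate ℓ (ℓ ^ i) + ρ).sum := by
    simp [merged, pow_succ']
  have hcard := calc
    (Multiset.replicate ℓ (ℓ ^ i) + ρ).card
        = (digits ℓ (.replicate ℓ (ℓ ^ i) + ρ).sum).sum := by
      rw [← sum_map_digits_sum_eq_card hℓ hν, (not_dvd_multinomial_iff _).mp hnotdvd]
    _ ≤ merged.card := by
      rw [← hsum, ← sum_map_digits_sum_eq_card hℓ hmerged]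
      exact digits_sum_sum_le merged
  simp only [merged, Multiset.card_add, Multiset.card_replicate, Multiset.card_cons] at hcard
  omega

end Multinomial

theorem minimal_ell_indivisible_multinomial_is_base_ell_general
    (ℓ n : ℕ) (hℓ : ℓ.Prime)
    (ν : Multiset ℕ) (hsum : ν.sum = n)
    (hnotdvd : ¬ ℓ ∣ n.factorial / (ν.map Nat.factorial).prod)
    (hmin : ∀ ν' : Multiset ℕ, (∀ c ∈ ν', 0 < c) →
      (∃ F : Multiset (Multiset ℕ), F.sum = ν' ∧ F.map Multiset.sum = ν) →
      ν' ≠ ν → ℓ ∣ n.factorial / (ν'.map Nat.factorial).prod) :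
    ν = ellPowerPartition ℓ n := by
  have : Fact ℓ.Prime := ⟨hℓ⟩
  subst hsum
  rw [← Multiset.multinomial_eq_div] at hnotdvd
  set ν' := ν.bind (ellPowerPartition ℓ)
  have hpow' : ∀ x ∈ ν', ∃ i, x = ℓ ^ i := fun x hx => by
    obtain ⟨c, -, hx⟩ := Multiset.mem_bind.mp hx
    exact exists_eq_pow_of_mem_digitsMultiset hx
  have hrefine : ν' = ν := by
    by_contra hne
    have hdvd := hmin ν' (fun x hx => by obtain ⟨i, rfl⟩ := hpow' x hx; exact pow_pos hℓ.pos i)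
      ⟨_, rfl, map_sum_map_ellPowerPartition ℓ ν⟩ hne
    rw [← sum_bind_ellPowerPartition ℓ ν, ← Multiset.multinomial_eq_div] at hdvd
    exact not_dvd_multinomial_bind_ellPowerPartition_iff.mpr hnotdvd hdvd
  have hpow : ∀ x ∈ ν, ∃ i, x = ℓ ^ i := hrefine ▸ hpow'
  exact eq_ellPowerPartition_sum hℓ.one_lt hpow (count_pow_lt_of_not_dvd_multinomial hpow hnotdvd)

theorem minimal_ell_indivisible_multinomial_is_base_ell
    (ℓ n : ℕ) (hℓ : ℓ.Prime) (hn : 0 < n)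
    (ν : Multiset ℕ) (hpos : ∀ c ∈ ν, 0 < c) (hsum : ν.sum = n)
    (hnotdvd : ¬ ℓ ∣ n.factorial / (ν.map Nat.factorial).prod)
    (hmin : ∀ ν' : Multiset ℕ, (∀ c ∈ ν', 0 < c) →
      (∃ F : Multiset (Multiset ℕ), F.sum = ν' ∧ F.map Multiset.sum = ν) →
      ν' ≠ ν → ℓ ∣ n.factorial / (ν'.map Nat.factorial).prod) :
    ν = ellPowerPartition ℓ n :=
  minimal_ell_indivisible_multinomial_is_base_ell_general ℓ n hℓ ν hsum hnotdvd hmin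
end
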